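/- Let α ∈ (1,2) and let (M_n)_{n≥1} be the GEM weights of the Poisson–Dirichlet(1/α, 1 − 1/α) distribution as in the context. Then there exist a constant c > 0 and an integer k₀ such that for all k ≥ k₀, the expectation satisfies E[M_k] ≥ c·k^{−α}. -/

import Mathlib

/-!
Write `α = s + 1` with `0 < s ≤ 1`. The Beta means give `E[Z_n] = s / (n + 2s)` and
`E[1 - Z_n] = (n + s) / (n + 2s)`, so by independence
`E[M_k] = s / (k + 2s) · ∏_{1 ≤ i < k} (i + s) / (i + 2s)`.
Bernoulli's inequality `(1 - 1/y)^s ≤ 1 - s/y`, valid for `s ≤ 1`, bounds each factor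
below by `((i - 1 + 2s) / (i + 2s))^s`, and these telescope to `(2s / (k - 1 + 2s))^s ≍ k^{-s}`.
-/

open MeasureTheory ProbabilityTheory Finset
open scoped ENNReal

/-- The Beta distribution on `[0,1]` with parameters `a, b`, defined via its density
`x^(a-1) (1-x)^(b-1) / B(a,b)` with respect to Lebesgue measure on `[0,1]`,
where `B(a,b) = Γ(a)Γ(b)/Γ(a+b)`. -/
noncomputable def betaMeasure' (a b : ℝ) : Measure ℝ :=
  (volume.restrict (Set.Icc (0:ℝ) 1)).withDensity fun x =>
    ENNReal.ofReal (x ^ (a - 1) * (1 - x) ^ (b - 1) /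
      (Real.Gamma a * Real.Gamma b / Real.Gamma (a + b)))

lemma Finset.prod_Ico_succ_top_ite {M : Type*} [CommMonoid M] {a k : ℕ} (hak : a ≤ k)
    (u v : ℕ → M) :
    ∏ i ∈ Ico a (k + 1), (if i < k then u i else v i) = (∏ i ∈ Ico a k, u i) * v k := by
  rw [prod_Ico_succ_top hak, if_neg (lt_irrefl k)]
  congr 1
  exact prod_congr rfl fun i hi => if_pos (mem_Ico.1 hi).2

namespace ProbabilityTheory

lemma integral_Icc_rpow_mul_one_sub_rpow {u v : ℝ} (hu : 0 < u) (hv : 0 < v) :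
    ∫ x in Set.Icc (0:ℝ) 1, x ^ (u - 1) * (1 - x) ^ (v - 1) = beta u v := by
  have hcpx : ((∫ x in (0:ℝ)..1, x ^ (u - 1) * (1 - x) ^ (v - 1) : ℝ) : ℂ) =
      Complex.betaIntegral u v := by
    rw [Complex.betaIntegral, ← intervalIntegral.integral_ofReal]
    refine intervalIntegral.integral_congr fun x hx => ?_
    rw [Set.uIcc_of_le zero_le_one] at hx
    push_cast
    rw [Complex.ofReal_cpow hx.1, Complex.ofReal_cpow (by linarith [hx.2])]
    push_cast
    ring_nf
  rw [integral_Icc_eq_integral_Ioc, ← intervalIntegral.integral_of_le zero_le_one,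
    beta_eq_betaIntegralReal u v hu hv, ← hcpx, Complex.ofReal_re]

lemma beta_comm (a b : ℝ) : beta a b = beta b a := by
  rw [beta, beta, mul_comm, add_comm]

lemma beta_add_one_left {a b : ℝ} (ha : 0 < a) (hb : 0 < b) :
    beta (a + 1) b = a / (a + b) * beta a b := by
  rw [beta, beta, Real.Gamma_add_one ha.ne', add_right_comm,
    Real.Gamma_add_one (by positivity)]
  field_simp

lemma beta_add_one_right {a b : ℝ} (ha : 0 < a) (hb : 0 < b) :
    beta a (b + 1) = b / (a + b) * beta a b := by
  rw [beta_comm, beta_add_one_left hb ha, beta_comm, add_comm b]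

lemma integral_betaMeasure' {a b : ℝ} (ha : 0 < a) (hb : 0 < b) (f : ℝ → ℝ) :
    ∫ x, f x ∂betaMeasure' a b =
      (∫ x in Set.Icc (0:ℝ) 1, f x * (x ^ (a - 1) * (1 - x) ^ (b - 1))) / beta a b := by
  rw [betaMeasure', integral_withDensity_eq_integral_toReal_smul (by fun_prop)
    (ae_of_all _ fun _ => ENNReal.ofReal_lt_top), ← integral_div]
  refine setIntegral_congr_fun measurableSet_Icc fun x hx => ?_
  have hx0 : 0 ≤ x := hx.1
  have hx1 : 0 ≤ 1 - x := sub_nonneg.2 hx.2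
  rw [← beta, ENNReal.toReal_ofReal (div_nonneg (by positivity) (beta_pos ha hb).le),
    smul_eq_mul]
  ring

lemma integral_id_betaMeasure' {a b : ℝ} (ha : 0 < a) (hb : 0 < b) :
    ∫ x, x ∂betaMeasure' a b = a / (a + b) := calc
  _ = (∫ x in Set.Icc (0:ℝ) 1, x ^ (a + 1 - 1) * (1 - x) ^ (b - 1)) / beta a b := by
    rw [integral_betaMeasure' ha hb]
    congr 1
    refine setIntegral_congr_fun measurableSet_Icc fun x hx => ?_
    rw [show a + 1 - 1 = a - 1 + 1 by ring, Real.rpow_add_one' hx.1 (by linarith)]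
    ring
  _ = a / (a + b) := by
    rw [integral_Icc_rpow_mul_one_sub_rpow (by linarith) hb, beta_add_one_left ha hb,
      mul_div_cancel_right₀ _ (beta_pos ha hb).ne']

lemma integral_one_sub_betaMeasure' {a b : ℝ} (ha : 0 < a) (hb : 0 < b) :
    ∫ x, (1 - x) ∂betaMeasure' a b = b / (a + b) := calc
  _ = (∫ x in Set.Icc (0:ℝ) 1, x ^ (a - 1) * (1 - x) ^ (b + 1 - 1)) / beta a b := by
    rw [integral_betaMeasure' ha hb]
    congr 1
    refine setIntegral_congr_fun measurableSet_Icc fun x hx => ?_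
    rw [show b + 1 - 1 = b - 1 + 1 by ring,
      Real.rpow_add_one' (sub_nonneg.2 hx.2) (by linarith)]
    ring
  _ = b / (a + b) := by
    rw [integral_Icc_rpow_mul_one_sub_rpow ha (by linarith), beta_add_one_right ha hb,
      mul_div_cancel_right₀ _ (beta_pos ha hb).ne']

variable {Ω : Type*} [MeasurableSpace Ω]

lemma iIndepFun.integral_finset_prod_comp {ι β : Type*} [MeasurableSpace β] {P : Measure Ω}
    {Z : ι → Ω → β} (hZ : iIndepFun Z P) (hm : ∀ i, AEMeasurable (Z i) P)
    {f : ι → β → ℝ} (hf : ∀ i, Measurable (f i)) (s : Finset ι) :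
    ∫ ω, ∏ i ∈ s, f i (Z i ω) ∂P = ∏ i ∈ s, ∫ ω, f i (Z i ω) ∂P := by
  have hZs : iIndepFun (fun i : s => Z i) P := hZ.precomp Subtype.val_injective
  simp_rw [← Finset.prod_coe_sort s]
  exact hZs.integral_fun_prod_comp (f := fun (i : s) => f i) (fun i => hm i)
    (fun i => (hf i).aestronglyMeasurable)

noncomputable def stickBreaking (Z : ℕ → Ω → ℝ) (n : ℕ) (ω : Ω) : ℝ :=
  (∏ i ∈ Ico 1 n, (1 - Z i ω)) * Z n ω

lemma integral_stickBreaking {P : Measure Ω} {Z : ℕ → Ω → ℝ} (hmeas : ∀ n, Measurable (Z n))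
    (hindep : iIndepFun Z P) {a b : ℕ → ℝ} (ha : ∀ n, 0 < a n) (hb : ∀ n, 0 < b n)
    (hdist : ∀ n, 1 ≤ n → P.map (Z n) = betaMeasure' (a n) (b n)) {k : ℕ} (hk : 1 ≤ k) :
    ∫ ω, stickBreaking Z k ω ∂P = (∏ i ∈ Ico 1 k, b i / (a i + b i)) * (a k / (a k + b k)) := by
  let f : ℕ → ℝ → ℝ := fun i x => if i < k then 1 - x else x
  have hf : ∀ i, Measurable (f i) := fun i => by
    by_cases hi : i < k <;> simp only [f, hi, if_true, if_false] <;> fun_prop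
  have hmean : ∀ i ∈ Ico 1 (k + 1), ∫ ω, f i (Z i ω) ∂P =
      if i < k then b i / (a i + b i) else a i / (a i + b i) := fun i hi => by
    rw [← integral_map (hmeas i).aemeasurable (hf i).aestronglyMeasurable,
      hdist i (mem_Ico.1 hi).1]
    by_cases hik : i < k
    · simp only [f, hik, if_true, integral_one_sub_betaMeasure' (ha i) (hb i)]
    · simp only [f, hik, if_false, integral_id_betaMeasure' (ha i) (hb i)]
  calc ∫ ω, stickBreaking Z k ω ∂P = ∫ ω, ∏ i ∈ Ico 1 (k + 1), f i (Z i ω) ∂P := by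
        simp only [f, prod_Ico_succ_top_ite hk, stickBreaking]
    _ = ∏ i ∈ Ico 1 (k + 1), ∫ ω, f i (Z i ω) ∂P :=
        hindep.integral_finset_prod_comp (fun i => (hmeas i).aemeasurable) hf _
    _ = _ := by rw [prod_congr rfl hmean, prod_Ico_succ_top_ite hk]

end ProbabilityTheory

lemma sub_one_div_rpow_le {p y : ℝ} (hp0 : 0 ≤ p) (hp1 : p ≤ 1) (hy : 1 ≤ y) :
    ((y - 1) / y) ^ p ≤ (y - p) / y := by
  have hy0 : 0 < y := by linarith
  calc ((y - 1) / y) ^ p = (1 + -y⁻¹) ^ p := by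
        rw [sub_div, div_self hy0.ne', one_div, sub_eq_add_neg]
    _ ≤ 1 + p * -y⁻¹ :=
      rpow_one_add_le_one_add_mul_self (by linarith [inv_le_one_of_one_le₀ hy]) hp0 hp1
    _ = (y - p) / y := by field_simp; ring

lemma prod_Ico_sub_one_add_div_add {c : ℝ} (hc : 0 < c) {k : ℕ} (hk : 1 ≤ k) :
    ∏ i ∈ Ico 1 k, ((i : ℝ) - 1 + c) / (i + c) = c / (k - 1 + c) := by
  induction k, hk using Nat.le_induction with
  | base => simp [hc.ne']
  | succ n hn ih =>
    have hn' : (1 : ℝ) ≤ n := by exact_mod_cast hn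
    have h1 : (n : ℝ) - 1 + c ≠ 0 := by linarith
    rw [prod_Ico_succ_top hn, ih, div_mul_div_cancel₀ h1]
    push_cast
    ring_nf

lemma div_rpow_le_prod_Ico {p c : ℝ} (hp0 : 0 ≤ p) (hp1 : p ≤ 1) (hc : 0 < c) {k : ℕ}
    (hk : 1 ≤ k) : (c / (k - 1 + c)) ^ p ≤ ∏ i ∈ Ico 1 k, ((i : ℝ) + c - p) / (i + c) := by
  have hi : ∀ i ∈ Ico 1 k, (1 : ℝ) ≤ i + c := fun i hi => by
    have : (1 : ℝ) ≤ i := by exact_mod_cast (mem_Ico.1 hi).1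
    linarith
  have hnonneg : ∀ i ∈ Ico 1 k, 0 ≤ ((i : ℝ) - 1 + c) / (i + c) := fun i hi' =>
    div_nonneg (by linarith [hi i hi']) (by linarith [hi i hi'])
  rw [← prod_Ico_sub_one_add_div_add hc hk, ← Real.finsetProd_rpow _ _ hnonneg]
  refine prod_le_prod (fun i hi' => Real.rpow_nonneg (hnonneg i hi') p) fun i hi' => ?_
  rw [sub_add_eq_add_sub]
  exact sub_one_div_rpow_le hp0 hp1 (hi i hi')

lemma rpow_neg_le_div_rpow_mul_div {s x : ℝ} (hs0 : 0 < s) (hs1 : s ≤ 1) (hx : 1 ≤ x) :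
    s * (2 * s) ^ s / 3 ^ (s + 1) * x ^ (-(s + 1)) ≤
      (2 * s / (x - 1 + 2 * s)) ^ s * (s / (x + 2 * s)) := by
  have hx0 : 0 < x := by linarith
  calc s * (2 * s) ^ s / 3 ^ (s + 1) * x ^ (-(s + 1))
      = (2 * s / (3 * x)) ^ s * (s / (3 * x)) := by
        rw [Real.div_rpow (by positivity) (by positivity), Real.mul_rpow (by norm_num) hx0.le,
          Real.rpow_neg hx0.le, Real.rpow_add_one (by norm_num), Real.rpow_add_one hx0.ne']
        field_simp
    _ ≤ (2 * s / (x - 1 + 2 * s)) ^ s * (s / (x + 2 * s)) := by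
        gcongr <;> linarith

theorem gem_first_moment_lower_general
    {Ω : Type*} [MeasurableSpace Ω] (P : Measure Ω)
    (α : ℝ) (hα1 : 1 < α) (hα2 : α < 2)
    (Z : ℕ → Ω → ℝ) (hmeas : ∀ n, Measurable (Z n))
    (hindep : iIndepFun Z P)
    (hdist : ∀ n : ℕ, 1 ≤ n →
      P.map (Z n) = betaMeasure' (1 - α⁻¹) ((n : ℝ) * α⁻¹ + (1 - α⁻¹)))
    (M : ℕ → Ω → ℝ)
    (hM : ∀ n ω, M n ω = (∏ i ∈ Finset.Ico 1 n, (1 - Z i ω)) * Z n ω) :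
    ∃ c : ℝ, 0 < c ∧ ∃ k₀ : ℕ, ∀ k : ℕ, k₀ ≤ k →
      c * (k : ℝ) ^ (-α) ≤ ∫ ω, M k ω ∂P := by
  obtain ⟨s, rfl⟩ : ∃ s, α = s + 1 := ⟨α - 1, by ring⟩
  have hs0 : 0 < s := by linarith
  have hs1 : s ≤ 1 := by linarith
  have ha : 0 < 1 - (s + 1)⁻¹ := sub_pos.2 (inv_lt_one_of_one_lt₀ hα1)
  have hb (n : ℕ) : 0 < (n : ℝ) * (s + 1)⁻¹ + (1 - (s + 1)⁻¹) := by positivity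
  have hmean : ∀ k, 1 ≤ k → ∫ ω, M k ω ∂P =
      (∏ i ∈ Ico 1 k, ((i : ℝ) + 2 * s - s) / (i + 2 * s)) * (s / (k + 2 * s)) := fun k hk => by
    rw [show (fun ω => M k ω) = stickBreaking Z k from funext (hM k),
      integral_stickBreaking hmeas hindep (fun _ => ha) hb hdist hk]
    congr 1
    · refine prod_congr rfl fun i _ => ?_
      rw [div_eq_div_iff (by positivity) (by positivity)]
      field_simp
      ring
    · rw [div_eq_div_iff (by positivity) (by positivity)]
      field_simp
      ring
  refine ⟨s * (2 * s) ^ s / 3 ^ (s + 1), by positivity, 1, fun k hk => ?_⟩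
  have hk' : (1 : ℝ) ≤ k := by exact_mod_cast hk
  calc _ ≤ (2 * s / (k - 1 + 2 * s)) ^ s * (s / (k + 2 * s)) :=
        rpow_neg_le_div_rpow_mul_div hs0 hs1 hk'
    _ ≤ _ := by
        rw [hmean k hk]
        gcongr
        exact div_rpow_le_prod_Ico hs0.le hs1 (by positivity) hk

/-- For the GEM weights `(M_k)` of the Poisson–Dirichlet `(1/α, 1 − 1/α)` distribution,
`α ∈ (1,2)`, there exist `c > 0` and `k₀` such that `E[M_k] ≥ c k^{−α}` for all `k ≥ k₀`. -/
theorem gem_first_moment_lower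
    {Ω : Type*} [MeasurableSpace Ω] (P : Measure Ω) [IsProbabilityMeasure P]
    (α : ℝ) (hα1 : 1 < α) (hα2 : α < 2)
    (Z : ℕ → Ω → ℝ) (hmeas : ∀ n, Measurable (Z n))
    (hindep : iIndepFun Z P)
    (hdist : ∀ n : ℕ, 1 ≤ n →
      P.map (Z n) = betaMeasure' (1 - α⁻¹) ((n : ℝ) * α⁻¹ + (1 - α⁻¹)))
    (M : ℕ → Ω → ℝ)
    (hM : ∀ n ω, M n ω = (∏ i ∈ Finset.Ico 1 n, (1 - Z i ω)) * Z n ω) :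
    ∃ c : ℝ, 0 < c ∧ ∃ k₀ : ℕ, ∀ k : ℕ, k₀ ≤ k →
      c * (k : ℝ) ^ (-α) ≤ ∫ ω, M k ω ∂P :=
  gem_first_moment_lower_general P α hα1 hα2 Z hmeas hindep hdist M hM
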